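/- arXiv:2109.09595 — 3 statements merged into one kernel-verified Lean document; each statement's English description precedes it below -/
import Mathlib

section
/- The proximal operator of τ·d_KL(z|·) is given in closed form: prox_{τ d_KL(z|·)}(p) = (p − τ + √((p−τ)² + 4τz))/2, for z ≥ 0, τ > 0, p ∈ ℝ. -/
/-- One-component Kullback-Leibler divergence, extended-real-valued. -/
noncomputable def dKL (z p : ℝ) : EReal :=
  if 0 < z then
    (if 0 < p then ((z * Real.log (z / p) + p - z : ℝ) : EReal) else ⊤)
  else
    (if 0 ≤ p then ((p : ℝ) : EReal) else ⊤)

set_option maxHeartbeats 1000000 in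
/-- Closed form for the proximal operator of `τ·dKL z ·`:
the unique minimizer of `x ↦ ½(x-p)² + τ·dKL z x` is `(p - τ + √((p-τ)² + 4τz))/2`. -/
theorem prox_dKL_closed_form (z τ p : ℝ) (hz : 0 ≤ z) (hτ : 0 < τ) :
    let xs := (p - τ + Real.sqrt ((p - τ) ^ 2 + 4 * τ * z)) / 2
    (∀ x : ℝ,
        (((xs - p) ^ 2 / 2 : ℝ) : EReal) + (τ : EReal) * dKL z xs ≤
          (((x - p) ^ 2 / 2 : ℝ) : EReal) + (τ : EReal) * dKL z x) ∧
    (∀ x : ℝ,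
        (((x - p) ^ 2 / 2 : ℝ) : EReal) + (τ : EReal) * dKL z x =
            (((xs - p) ^ 2 / 2 : ℝ) : EReal) + (τ : EReal) * dKL z xs → x = xs) := by
  intro xs
  have hs0 : 0 ≤ Real.sqrt ((p - τ) ^ 2 + 4 * τ * z) := Real.sqrt_nonneg _
  have hs2 : Real.sqrt ((p - τ) ^ 2 + 4 * τ * z) ^ 2 = (p - τ) ^ 2 + 4 * τ * z :=
    Real.sq_sqrt (by nlinarith)
  set s := Real.sqrt ((p - τ) ^ 2 + 4 * τ * z) with hs
  have hxsdef : xs = (p - τ + s) / 2 := rfl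
  clear_value xs
  clear hs
  clear_value s
  have hxs0 : 0 ≤ xs := by
    rw [hxsdef]; nlinarith [mul_self_nonneg (s - (p - τ)), mul_self_nonneg (s + (p - τ))]
  have hge : p - τ ≤ xs := by
    rw [hxsdef]
    nlinarith [mul_self_nonneg (s - (p - τ)), mul_self_nonneg (s + (p - τ)), mul_nonneg hτ.le hz]
  have hq : xs ^ 2 = (p - τ) * xs + τ * z := by rw [hxsdef]; nlinarith
  have main : ∀ x : ℝ,
      ((((xs - p) ^ 2 / 2 : ℝ) : EReal) + (τ : EReal) * dKL z xs ≤
        (((x - p) ^ 2 / 2 : ℝ) : EReal) + (τ : EReal) * dKL z x) ∧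
      ((((x - p) ^ 2 / 2 : ℝ) : EReal) + (τ : EReal) * dKL z x =
          (((xs - p) ^ 2 / 2 : ℝ) : EReal) + (τ : EReal) * dKL z xs → x = xs) := by
    intro x
    rcases lt_or_eq_of_le hz with hz' | hz'
    · -- z > 0
      have hxs : 0 < xs := by
        rcases hxs0.lt_or_eq with h | h
        · exact h
        · exfalso; nlinarith
      have hdxs : dKL z xs = ((z * Real.log (z / xs) + xs - z : ℝ) : EReal) := by
        simp [dKL, hz', hxs]
      by_cases hx : 0 < x
      · have hdx : dKL z x = ((z * Real.log (z / x) + x - z : ℝ) : EReal) := by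
          simp [dKL, hz', hx]
        rw [hdx, hdxs, ← EReal.coe_mul, ← EReal.coe_add, ← EReal.coe_mul, ← EReal.coe_add,
          EReal.coe_le_coe_iff, EReal.coe_eq_coe_iff]
        have hlog : Real.log (x / xs) ≤ x / xs - 1 :=
          Real.log_le_sub_one_of_pos (by positivity)
        have hld : Real.log (x / xs) = Real.log x - Real.log xs :=
          Real.log_div hx.ne' hxs.ne'
        have hldx : Real.log (z / x) = Real.log z - Real.log x :=
          Real.log_div hz'.ne' hx.ne'
        have hldxs : Real.log (z / xs) = Real.log z - Real.log xs :=
          Real.log_div hz'.ne' hxs.ne'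
        have hlog2 : xs * Real.log x - xs * Real.log xs ≤ x - xs := by
          have h := mul_le_mul_of_nonneg_left hlog hxs0
          rw [hld] at h
          have hxx : xs * (x / xs - 1) = x - xs := by field_simp
          nlinarith
        have h1 : τ * z * (xs * Real.log x - xs * Real.log xs) ≤ τ * z * (x - xs) :=
          mul_le_mul_of_nonneg_left hlog2 (by positivity)
        have hP : xs * ((x - p) ^ 2 / 2 + τ * (x - z) - ((xs - p) ^ 2 / 2 + τ * (xs - z)))
            - τ * z * (x - xs) = xs * (x - xs) ^ 2 / 2 := by
          linear_combination (x - xs) * hq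
        have hkey : (xs - p) ^ 2 / 2 + τ * (z * Real.log (z / xs) + xs - z) +
            (x - xs) ^ 2 / 2 ≤ (x - p) ^ 2 / 2 + τ * (z * Real.log (z / x) + x - z) := by
          rw [hldx, hldxs]
          nlinarith [h1, hP, hxs, sq_nonneg (x - xs)]
        constructor
        · nlinarith [sq_nonneg (x - xs)]
        · intro heq
          have h0 : (x - xs) ^ 2 ≤ 0 := by nlinarith
          have h0' : (x - xs) ^ 2 = 0 := le_antisymm h0 (sq_nonneg _)
          have := sq_eq_zero_iff.mp h0'
          linarith
      · have hdx : dKL z x = ⊤ := by simp [dKL, hz', hx]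
        rw [hdx, EReal.coe_mul_top_of_pos hτ, EReal.coe_add_top]
        constructor
        · exact le_top
        · intro heq
          exfalso
          rw [hdxs, ← EReal.coe_mul, ← EReal.coe_add] at heq
          exact EReal.coe_ne_top _ heq.symm
    · -- z = 0
      have hz0 : z = 0 := hz'.symm
      have hcomp : xs * (xs - (p - τ)) = 0 := by nlinarith
      have hdxs : dKL z xs = ((xs : ℝ) : EReal) := by
        simp [dKL, hz0, hxs0]
      by_cases hx : 0 ≤ x
      · have hdx : dKL z x = ((x : ℝ) : EReal) := by simp [dKL, hz0, hx]
        rw [hdx, hdxs, ← EReal.coe_mul, ← EReal.coe_add, ← EReal.coe_mul, ← EReal.coe_add,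
          EReal.coe_le_coe_iff, EReal.coe_eq_coe_iff]
        have hkey : (xs - p) ^ 2 / 2 + τ * xs + (x - xs) ^ 2 / 2 ≤ (x - p) ^ 2 / 2 + τ * x := by
          nlinarith [mul_nonneg hx (by linarith : (0:ℝ) ≤ xs - (p - τ)), hcomp]
        constructor
        · nlinarith [sq_nonneg (x - xs)]
        · intro heq
          have h0 : (x - xs) ^ 2 ≤ 0 := by nlinarith
          have h0' : (x - xs) ^ 2 = 0 := le_antisymm h0 (sq_nonneg _)
          have := sq_eq_zero_iff.mp h0'
          linarith
      · have hdx : dKL z x = ⊤ := by simp [dKL, hz0, hx]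
        rw [hdx, EReal.coe_mul_top_of_pos hτ, EReal.coe_add_top]
        constructor
        · exact le_top
        · intro heq
          exfalso
          rw [hdxs, ← EReal.coe_mul, ← EReal.coe_add] at heq
          exact EReal.coe_ne_top _ heq.symm
  exact ⟨fun x => (main x).1, fun x => (main x).2⟩
end

section
/- If g is strictly convex, h is convex (both proper lower semicontinuous), and B is linear, then the image B·x̂ is the same for every minimizer x̂ of x ↦ g(Bx) + h(x): i.e., for any two minimizers x̂₁, x̂₂ one has B·x̂₁ = B·x̂₂. -/
/-- If `g` is strictly convex (on its domain), `h` is convex (both proper lsc), and `B` is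
linear, then every minimizer `x̂` of `x ↦ g(Bx) + h(x)` yields the same image `B x̂`. -/
theorem strictly_convex_common_image (n m : ℕ)
    (g : (Fin n → ℝ) → EReal) (h : (Fin m → ℝ) → EReal) (B : (Fin m → ℝ) →ₗ[ℝ] (Fin n → ℝ))
    (hg_proper_top : ∃ y, g y ≠ ⊤) (hg_proper_bot : ∀ y, g y ≠ ⊥)
    (hg_lsc : LowerSemicontinuous g)
    (hg_strict : ∀ a b : Fin n → ℝ, g a ≠ ⊤ → g b ≠ ⊤ → a ≠ b → ∀ t : ℝ, 0 < t → t < 1 →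
      g (t • a + (1 - t) • b) < (t : EReal) * g a + ((1 - t : ℝ) : EReal) * g b)
    (hh_proper_top : ∃ x, h x ≠ ⊤) (hh_proper_bot : ∀ x, h x ≠ ⊥)
    (hh_lsc : LowerSemicontinuous h)
    (hh_conv : ∀ a b : Fin m → ℝ, ∀ t : ℝ, 0 ≤ t → t ≤ 1 →
      h (t • a + (1 - t) • b) ≤ (t : EReal) * h a + ((1 - t : ℝ) : EReal) * h b)
    (x₁ x₂ : Fin m → ℝ)
    (hmin₁ : ∀ x : Fin m → ℝ, g (B x₁) + h x₁ ≤ g (B x) + h x)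
    (hmin₂ : ∀ x : Fin m → ℝ, g (B x₂) + h x₂ ≤ g (B x) + h x)
    (hfin : g (B x₁) + h x₁ ≠ ⊤) :
    B x₁ = B x₂ := by
  by_contra hne
  -- equality of minimum values
  have hM : g (B x₁) + h x₁ = g (B x₂) + h x₂ := le_antisymm (hmin₁ x₂) (hmin₂ x₁)
  have hfin₂ : g (B x₂) + h x₂ ≠ ⊤ := hM ▸ hfin
  -- finiteness of each summand
  have hg₁t : g (B x₁) ≠ ⊤ := fun ht => hfin (by simp [ht, EReal.top_add_of_ne_bot (hh_proper_bot x₁)])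
  have hh₁t : h x₁ ≠ ⊤ := fun ht => hfin (by simp [ht, EReal.add_top_of_ne_bot (hg_proper_bot (B x₁))])
  have hg₂t : g (B x₂) ≠ ⊤ := fun ht => hfin₂ (by simp [ht, EReal.top_add_of_ne_bot (hh_proper_bot x₂)])
  have hh₂t : h x₂ ≠ ⊤ := fun ht => hfin₂ (by simp [ht, EReal.add_top_of_ne_bot (hg_proper_bot (B x₂))])
  obtain ⟨a₁, ha₁⟩ : ∃ r : ℝ, g (B x₁) = (r : EReal) := ⟨(g (B x₁)).toReal, (EReal.coe_toReal hg₁t (hg_proper_bot _)).symm⟩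
  obtain ⟨a₂, ha₂⟩ : ∃ r : ℝ, g (B x₂) = (r : EReal) := ⟨(g (B x₂)).toReal, (EReal.coe_toReal hg₂t (hg_proper_bot _)).symm⟩
  obtain ⟨b₁, hb₁⟩ : ∃ r : ℝ, h x₁ = (r : EReal) := ⟨(h x₁).toReal, (EReal.coe_toReal hh₁t (hh_proper_bot _)).symm⟩
  obtain ⟨b₂, hb₂⟩ : ∃ r : ℝ, h x₂ = (r : EReal) := ⟨(h x₂).toReal, (EReal.coe_toReal hh₂t (hh_proper_bot _)).symm⟩
  set x := (2⁻¹ : ℝ) • x₁ + (2⁻¹ : ℝ) • x₂ with hx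
  have hBx : B x = (2⁻¹ : ℝ) • B x₁ + (2⁻¹ : ℝ) • B x₂ := by
    simp [hx, map_add, map_smul]
  have h1 : ((1 : ℝ) - 2⁻¹) = (2⁻¹ : ℝ) := by norm_num
  have hgmid : g (B x) < ((2⁻¹ : ℝ) : EReal) * g (B x₁) + ((2⁻¹ : ℝ) : EReal) * g (B x₂) := by
    have := hg_strict (B x₁) (B x₂) hg₁t hg₂t hne (2⁻¹) (by norm_num) (by norm_num)
    rw [h1] at this
    rwa [hBx]
  have hhmid : h x ≤ ((2⁻¹ : ℝ) : EReal) * h x₁ + ((2⁻¹ : ℝ) : EReal) * h x₂ := by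
    have := hh_conv x₁ x₂ (2⁻¹) (by norm_num) (by norm_num)
    rwa [h1] at this
  have hlt : g (B x) + h x < g (B x₁) + h x₁ := by
    calc g (B x) + h x
        < (((2⁻¹ : ℝ) : EReal) * g (B x₁) + ((2⁻¹ : ℝ) : EReal) * g (B x₂))
          + (((2⁻¹ : ℝ) : EReal) * h x₁ + ((2⁻¹ : ℝ) : EReal) * h x₂) := by
          apply EReal.add_lt_add_of_lt_of_le hgmid hhmid
          · exact hh_proper_bot x
          · rw [hb₁, hb₂]
            push_cast
            exact ne_of_beq_false rfl |>.elim
        _ = g (B x₁) + h x₁ := by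
          rw [ha₁, ha₂, hb₁, hb₂] at hM ⊢
          push_cast at hM ⊢
          norm_cast at hM ⊢
          linarith
  exact absurd (hmin₁ x) (not_le.mpr hlt)
end

section
/- If A : H₁ → H₂ is a bounded linear map between real Hilbert spaces with A A* = β·Id for some β > 0, and g is proper lower semicontinuous convex on H₂, then prox_{g∘A}(x) = x + β^{-1} A*(prox_{βg}(Ax) − Ax). -/
open scoped RealInnerProductSpace

/-- Prox of a composition with a linear map satisfying `A A* = β·Id`: if `A : H₁ → H₂` is a
bounded linear map between real Hilbert spaces with `A ∘ A* = β·Id`, `β > 0`, `g` proper lsc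
convex on `H₂`, and `u = prox_{βg}(Ax)`, then `x + β⁻¹·A*(u − Ax)` minimizes
`w ↦ ½‖w − x‖² + g(Aw)`, i.e. `prox_{g∘A}(x) = x + β⁻¹ A*(prox_{βg}(Ax) − Ax)`. -/
theorem prox_composition_semiorthogonal
    {H₁ H₂ : Type*} [NormedAddCommGroup H₁] [InnerProductSpace ℝ H₁] [CompleteSpace H₁]
    [NormedAddCommGroup H₂] [InnerProductSpace ℝ H₂] [CompleteSpace H₂]
    (A : H₁ →L[ℝ] H₂) (β : ℝ) (hβ : 0 < β)
    (hAA : ∀ y : H₂, A ((ContinuousLinearMap.adjoint A) y) = β • y)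
    (g : H₂ → EReal)
    (hg_proper_top : ∃ y, g y ≠ ⊤) (hg_proper_bot : ∀ y, g y ≠ ⊥)
    (hg_lsc : LowerSemicontinuous g)
    (hg_conv : ∀ a b : H₂, ∀ t : ℝ, 0 ≤ t → t ≤ 1 →
      g (t • a + (1 - t) • b) ≤ (t : EReal) * g a + ((1 - t : ℝ) : EReal) * g b)
    (x : H₁) (u : H₂)
    (hu : ∀ w : H₂,
      ((‖u - A x‖ ^ 2 / 2 : ℝ) : EReal) + (β : EReal) * g u ≤
        ((‖w - A x‖ ^ 2 / 2 : ℝ) : EReal) + (β : EReal) * g w) :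
    ∀ w : H₁,
      ((‖(x + β⁻¹ • (ContinuousLinearMap.adjoint A) (u - A x)) - x‖ ^ 2 / 2 : ℝ) : EReal) +
          g (A (x + β⁻¹ • (ContinuousLinearMap.adjoint A) (u - A x))) ≤
        ((‖w - x‖ ^ 2 / 2 : ℝ) : EReal) + g (A w) := by
  intro w
  set A' := ContinuousLinearMap.adjoint A with hA'def
  -- key algebraic facts
  have hAstar_sq : ∀ y : H₂, ‖A' y‖ ^ 2 = β * ‖y‖ ^ 2 := by
    intro y
    have h1 : ⟪A' y, A' y⟫ = ⟪y, A (A' y)⟫ := ContinuousLinearMap.adjoint_inner_left A (A' y) y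
    rw [hAA, real_inner_smul_right, real_inner_self_eq_norm_sq,
      real_inner_self_eq_norm_sq] at h1
    exact h1
  have hAp : A (x + β⁻¹ • A' (u - A x)) = u := by
    rw [map_add, map_smul, hAA, smul_smul, inv_mul_cancel₀ hβ.ne', one_smul]
    abel
  have hpxnorm : ‖(x + β⁻¹ • A' (u - A x)) - x‖ ^ 2 = β⁻¹ * ‖u - A x‖ ^ 2 := by
    have : (x + β⁻¹ • A' (u - A x)) - x = β⁻¹ • A' (u - A x) := by abel
    rw [this, norm_smul, mul_pow, hAstar_sq]
    rw [Real.norm_eq_abs, abs_of_pos (inv_pos.mpr hβ)]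
    field_simp
  have hAbound : ‖A (w - x)‖ ^ 2 ≤ β * ‖w - x‖ ^ 2 := by
    have h1 : ⟪A (w - x), A (w - x)⟫ = ⟪A' (A (w - x)), w - x⟫ :=
      (ContinuousLinearMap.adjoint_inner_left A (w - x) (A (w - x))).symm
    have h2 : ⟪A' (A (w - x)), w - x⟫ ≤ ‖A' (A (w - x))‖ * ‖w - x‖ :=
      real_inner_le_norm _ _
    have h3 : ‖A' (A (w - x))‖ ^ 2 = β * ‖A (w - x)‖ ^ 2 := hAstar_sq _
    rw [real_inner_self_eq_norm_sq] at h1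
    rcases eq_or_lt_of_le (norm_nonneg (A (w - x))) with hc | hc
    · rw [← hc]
      simpa using mul_nonneg hβ.le (sq_nonneg ‖w - x‖)
    · have hc2 : (0:ℝ) < ‖A (w - x)‖ ^ 2 := by positivity
      have h6 := mul_self_le_mul_self (by positivity : (0:ℝ) ≤ ‖A (w - x)‖ ^ 2)
        (le_of_eq h1 |>.trans h2)
      nlinarith [h6, h3, hc2, hβ]
  -- g u is real
  obtain ⟨y₀, hy₀⟩ := hg_proper_top
  have hgu_ne_top : g u ≠ ⊤ := by
    intro htop
    obtain ⟨s, hs⟩ : ∃ s : ℝ, g y₀ = (s : EReal) :=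
      ⟨(g y₀).toReal, (EReal.coe_toReal hy₀ (hg_proper_bot y₀)).symm⟩
    have := hu y₀
    rw [htop, hs, EReal.coe_mul_top_of_pos (by exact_mod_cast hβ)] at this
    rw [EReal.add_top_of_ne_bot (by exact EReal.coe_ne_bot _)] at this
    have hfin : ((‖y₀ - A x‖ ^ 2 / 2 : ℝ) : EReal) + (β : EReal) * (s : EReal) < ⊤ := by
      rw [← EReal.coe_mul, ← EReal.coe_add]
      exact EReal.coe_lt_top _
    exact absurd (lt_of_le_of_lt this hfin) (lt_irrefl ⊤)
  obtain ⟨r, hr⟩ : ∃ r : ℝ, g u = (r : EReal) :=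
    ⟨(g u).toReal, (EReal.coe_toReal hgu_ne_top (hg_proper_bot u)).symm⟩
  rw [hAp, hr]
  by_cases hT : g (A w) = ⊤
  · rw [hT, EReal.add_top_of_ne_bot (by exact EReal.coe_ne_bot _)]
    exact le_top
  obtain ⟨s, hs⟩ : ∃ s : ℝ, g (A w) = (s : EReal) :=
    ⟨(g (A w)).toReal, (EReal.coe_toReal hT (hg_proper_bot (A w))).symm⟩
  rw [hs]
  have hu' := hu (A w)
  rw [hr, hs, ← EReal.coe_mul, ← EReal.coe_mul, ← EReal.coe_add, ← EReal.coe_add,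
    EReal.coe_le_coe_iff] at hu'
  rw [← EReal.coe_add, ← EReal.coe_add, EReal.coe_le_coe_iff]
  have hAwx : A w - A x = A (w - x) := by rw [map_sub]
  rw [hAwx] at hu'
  rw [hpxnorm]
  have hmul : β * (β⁻¹ * ‖u - A x‖ ^ 2 / 2 + r) ≤ β * (‖w - x‖ ^ 2 / 2 + s) := by
    calc β * (β⁻¹ * ‖u - A x‖ ^ 2 / 2 + r) = ‖u - A x‖ ^ 2 / 2 + β * r := by
          rw [mul_add, ← mul_div_assoc, ← mul_assoc, mul_inv_cancel₀ hβ.ne', one_mul]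
      _ ≤ ‖A (w - x)‖ ^ 2 / 2 + β * s := hu'
      _ ≤ β * (‖w - x‖ ^ 2 / 2 + s) := by nlinarith [hAbound]
  exact le_of_mul_le_mul_left hmul hβ
end
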